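/- (Seven points formula.) Fix integers n ≥ 2 and 1 ≤ j ≤ n-1. Define lattice points k^0,…,k^6 ∈ ℕ^{n+1} (coordinates indexed 0,…,n, e^i the i-th standard basis vector) by: k^0_i = 1 for 0 ≤ i ≤ j+1 and k^0_i = 0 for i > j+1; k^1 = k^0 + e^j + e^{j+1}; k^2 = k^0 + 2e^j + 2e^{j+1}; k^3 = k^0 + e^{j+1}; k^4 = k^0 + e^j; k^5 = k^0 + e^j + 2e^{j+1}; k^6 = k^0 + 2e^j + 3e^{j+1}. Let x ∈ [-1,1]^{n+1} and write ã_r = a(x, k^r) for r = 0,…,6. Set y_± = -7ã_1/(5ã_0) ± √( 3ã_1ã_3ã_4/ã_0^3 + (7ã_1/(5ã_0))^2 - 9ã_2/(5ã_0) ) and Y_± = -5ã_5/(4ã_3) ± √( 5ã_4ã_5/(2ã_0^2) + (5ã_5/(4ã_3))^2 - 4ã_6/(3ã_3) ), with √ the real square root. If ã_0 ã_3 ≠ 0 and 7ã_1/(5ã_0) ≠ 5ã_5/(4ã_3), then the intersection {y_+, y_-} ∩ {Y_+, Y_-} consists of exactly one element y, and moreover x_j = -(ã_3/|ã_3|)·√(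 ã_3ã_4/(2ã_0^2 y) ). -/

import Mathlib

/-- Amplitude factor `f^{(p,q)}`. -/
noncomputable def ampF (p q : ℤ) (x : ℝ) : ℝ :=
  if p < 0 ∨ q < 0 then 0
  else if q = 0 then x ^ p.toNat
  else if p = 0 then 0
  else ∑ j ∈ Finset.Icc 1 (min p q).toNat,
    (-1 : ℝ) ^ (q.toNat - j) * (p.toNat.choose j : ℝ) * ((q.toNat - 1).choose (j - 1) : ℝ) *
      x ^ (p.toNat + q.toNat - 2 * j) * (1 - x ^ 2) ^ j

/-- Amplitude polynomial `a(x,k)`. -/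
noncomputable def ampA (n : ℕ) (x : Fin (n+1) → ℝ) (k : Fin (n+1) → ℕ) : ℝ :=
  (if k 0 = 1 then (1:ℝ) else 0) * x (Fin.last n) ^ k (Fin.last n) *
    ∏ j : Fin n, ampF (k j.castSucc) (k j.succ) (x j.castSucc)
/-- `i`-th standard basis vector of `ℕ^{n+1}`. -/
def evec (n : ℕ) (i : Fin (n+1)) : Fin (n+1) → ℕ := fun i' => if i' = i then 1 else 0

/-!
All seven exponent vectors agree with `k⁰` outside the positions `j, j + 1`, so each amplitude
factors as `C · (-u)^p · f^{(p+1,q+1)}(t) · w^(q+1)` with `u = x_{j-1}`, `t = x_j`, `w = x_{j+1}`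
and a common factor `C = ∏_{i<j} (1 - x_i²) ≥ 0`. In these variables both discriminants are
perfect squares, `(uw(21t² - 2)/5)²` and `(uw(10t² - 3)/2)²`, so `{y_±} = {uw, uw(9 - 42t²)/5}`
and `{Y_±} = {uw, uw(4 - 10t²)}`. The two second roots differ by a nonzero multiple of
`7ã₁/(5ã₀) - 5ã₅/(4ã₃)`, so the intersection is `{uw}`; finally `ã₃ã₄/(2ã₀² uw) = t²` and `ã₃`
has the sign of `-t`.
-/

open Finset

lemma ampF_natCast_zero (p : ℕ) (x : ℝ) : ampF p 0 x = x ^ p := by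
  simp [ampF]

lemma ampF_natCast_of_pos {p q : ℕ} (hp : 0 < p) (hq : 0 < q) (x : ℝ) :
    ampF p q x = ∑ i ∈ range (min p q), (-1 : ℝ) ^ (q - 1 - i) * p.choose (i + 1) *
      (q - 1).choose i * x ^ (p + q - 2 * (i + 1)) * (1 - x ^ 2) ^ (i + 1) := by
  simp only [ampF, ← Nat.cast_min, Int.toNat_natCast]
  rw [if_neg (by omega), if_neg (by omega), if_neg (by omega), ← Ico_add_one_right_eq_Icc,
    sum_Ico_eq_sum_range]
  refine sum_congr (by simp) fun i _ => ?_
  rw [add_comm 1 i, Nat.add_sub_cancel, Nat.sub_sub, add_comm 1 i]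

lemma ampF_one_left {q : ℕ} (hq : 0 < q) (x : ℝ) :
    ampF 1 q x = (-x) ^ (q - 1) * (1 - x ^ 2) := by
  rw [← Nat.cast_one, ampF_natCast_of_pos one_pos hq, min_eq_left hq]
  simp [show 1 + q - 2 = q - 1 by omega, neg_pow x]

lemma ampF_one_one (x : ℝ) : ampF 1 1 x = 1 - x ^ 2 := by
  simpa using ampF_one_left one_pos x

lemma ampF_one_two (x : ℝ) : ampF 1 2 x = -x * (1 - x ^ 2) := by
  simpa using ampF_one_left two_pos x

lemma ampF_two_one (x : ℝ) : ampF 2 1 x = 2 * x * (1 - x ^ 2) := by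
  rw [show (2 : ℤ) = (2 : ℕ) from rfl, ← Nat.cast_one,
    ampF_natCast_of_pos (by norm_num) (by norm_num)]
  simp

lemma ampF_two_two (x : ℝ) : ampF 2 2 x = (1 - x ^ 2) * (1 - 3 * x ^ 2) := by
  rw [show (2 : ℤ) = (2 : ℕ) from rfl, ampF_natCast_of_pos (by norm_num) (by norm_num)]
  norm_num [sum_range_succ]; ring

lemma ampF_two_three (x : ℝ) : ampF 2 3 x = 2 * x * (1 - x ^ 2) * (2 * x ^ 2 - 1) := by
  rw [show (2 : ℤ) = (2 : ℕ) from rfl, show (3 : ℤ) = (3 : ℕ) from rfl,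
    ampF_natCast_of_pos (by norm_num) (by norm_num)]
  norm_num [sum_range_succ]; ring

lemma ampF_three_three (x : ℝ) : ampF 3 3 x = (1 - x ^ 2) * (10 * x ^ 4 - 8 * x ^ 2 + 1) := by
  rw [show (3 : ℤ) = (3 : ℕ) from rfl, ampF_natCast_of_pos (by norm_num) (by norm_num)]
  norm_num [sum_range_succ, Nat.choose]; ring

lemma ampF_three_four (x : ℝ) :
    ampF 3 4 x = -(3 * x * (1 - x ^ 2) * (5 * x ^ 4 - 5 * x ^ 2 + 1)) := by
  rw [show (3 : ℤ) = (3 : ℕ) from rfl, show (4 : ℤ) = (4 : ℕ) from rfl,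
    ampF_natCast_of_pos (by norm_num) (by norm_num)]
  norm_num [sum_range_succ, Nat.choose]; ring

lemma one_sub_sq_nonneg_of_mem_Icc {y : ℝ} (hy : y ∈ Set.Icc (-1 : ℝ) 1) : 0 ≤ 1 - y ^ 2 :=
  sub_nonneg.2 ((sq_le_one_iff_abs_le_one y).2 (abs_le.2 hy))

def blockPattern (j p q i : ℕ) : ℕ :=
  if i < j then 1 else if i = j then p else if i = j + 1 then q else 0

lemma blockPattern_of_lt {j i : ℕ} (p q : ℕ) (h : i < j) : blockPattern j p q i = 1 :=
  if_pos h

lemma blockPattern_of_succ_lt {j i : ℕ} (p q : ℕ) (h : j + 1 < i) : blockPattern j p q i = 0 := by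
  simp only [blockPattern]
  rw [if_neg (by omega), if_neg (by omega), if_neg (by omega)]

-- The trailing factor `x_n ^ k_n` of `ampA` is `f^{(k_n, 0)}(x_n)`.
lemma ampA_eq_prod_range {n : ℕ} {x : Fin (n + 1) → ℝ} {k : Fin (n + 1) → ℕ} {X : ℕ → ℝ}
    {K : ℕ → ℕ} (hX : ∀ i : Fin (n + 1), x i = X i) (hk : ∀ i : Fin (n + 1), k i = K i)
    (hK : K (n + 1) = 0) :
    ampA n x k =
      (if K 0 = 1 then 1 else 0) * ∏ m ∈ range (n + 1), ampF (K m) (K (m + 1)) (X m) := by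
  rw [ampA, prod_range_succ, ← Fin.prod_univ_eq_prod_range]
  simp [hX, hk, hK, ampF_natCast_zero, mul_comm, mul_left_comm]

lemma prod_range_ampF_blockPattern {n j : ℕ} (p q : ℕ) (hj : 1 ≤ j) (hjn : j + 1 ≤ n) (X : ℕ → ℝ) :
    ∏ m ∈ range (n + 1), ampF (blockPattern j p q m) (blockPattern j p q (m + 1)) (X m) =
      (∏ i ∈ range (j - 1), (1 - X i ^ 2)) * ampF 1 p (X (j - 1)) * ampF p q (X j) *
        X (j + 1) ^ q := by
  obtain ⟨i, rfl⟩ : ∃ i, j = i + 1 := ⟨j - 1, by omega⟩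
  have htail : ∏ m ∈ range (n - i - 2),
      ampF (blockPattern (i + 1) p q (i + 3 + m)) (blockPattern (i + 1) p q (i + 3 + m + 1))
        (X (i + 3 + m)) = 1 :=
    prod_eq_one fun m _ => by
      rw [blockPattern_of_succ_lt p q (by omega), blockPattern_of_succ_lt p q (by omega)]
      exact ampF_natCast_zero 0 _
  have hhead : ∏ m ∈ range i,
      ampF (blockPattern (i + 1) p q m) (blockPattern (i + 1) p q (m + 1)) (X m) =
        ∏ m ∈ range i, (1 - X m ^ 2) :=
    prod_congr rfl fun m hm => by
      have hm := mem_range.1 hm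
      rw [blockPattern_of_lt p q (by omega), blockPattern_of_lt p q (by omega), Nat.cast_one,
        ampF_one_one]
  rw [show n + 1 = i + 3 + (n - i - 2) by omega, prod_range_add, htail, mul_one,
    prod_range_succ, prod_range_succ, prod_range_succ, hhead]
  simp [blockPattern, ampF_natCast_zero, add_assoc]

lemma add_smul_evec_apply {n j : ℕ} {k0 : Fin (n + 1) → ℕ} (hj : j + 1 < n + 1)
    (hk0 : ∀ i : Fin (n + 1), k0 i = if (i : ℕ) ≤ j + 1 then 1 else 0) (p q : ℕ)
    (i : Fin (n + 1)) :
    (k0 + p • evec n ⟨j, by omega⟩ + q • evec n ⟨j + 1, hj⟩) i =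
      blockPattern j (p + 1) (q + 1) i := by
  simp only [Pi.add_apply, Pi.smul_apply, smul_eq_mul, evec, hk0, blockPattern, Fin.ext_iff]
  split_ifs <;> omega

lemma exists_ampA_add_smul_evec {n j : ℕ} (hj : 1 ≤ j) (hjn : j + 1 ≤ n) {k0 : Fin (n + 1) → ℕ}
    (hk0 : ∀ i : Fin (n + 1), k0 i = if (i : ℕ) ≤ j + 1 then 1 else 0) {x : Fin (n + 1) → ℝ}
    (hx : ∀ i, x i ∈ Set.Icc (-1 : ℝ) 1) :
    ∃ C, 0 ≤ C ∧ ∀ (p q : ℕ) (k : Fin (n + 1) → ℕ),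
      k = k0 + p • evec n ⟨j, by omega⟩ + q • evec n ⟨j + 1, by omega⟩ → ampA n x k =
        C * (-x ⟨j - 1, by omega⟩) ^ p * ampF (p + 1 : ℕ) (q + 1 : ℕ) (x ⟨j, by omega⟩) *
          x ⟨j + 1, by omega⟩ ^ (q + 1) := by
  let X : ℕ → ℝ := fun m => if h : m < n + 1 then x ⟨m, h⟩ else 0
  have hX : ∀ i : Fin (n + 1), x i = X i := fun i => by simp only [X, dif_pos i.isLt]
  have hX_sq : ∀ m ≤ n, 0 ≤ 1 - X m ^ 2 := fun m hm => by
    simpa only [hX] using one_sub_sq_nonneg_of_mem_Icc (hx ⟨m, by omega⟩)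
  refine ⟨(∏ i ∈ range (j - 1), (1 - X i ^ 2)) * (1 - X (j - 1) ^ 2),
    mul_nonneg (prod_nonneg fun i hi => hX_sq i (by rw [mem_range] at hi; omega))
      (hX_sq _ (by omega)),
    fun p q k hk => ?_⟩
  subst hk
  rw [ampA_eq_prod_range hX (add_smul_evec_apply (by omega) hk0 p q)
      (blockPattern_of_succ_lt _ _ (by omega)), if_pos (blockPattern_of_lt _ _ (by omega)),
    one_mul, prod_range_ampF_blockPattern _ _ hj hjn, ampF_one_left p.succ_pos, hX, hX, hX]
  simp only [Nat.succ_sub_one]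
  ring

lemma exists_seven_points_amplitudes {n j : ℕ} (hj : 1 ≤ j) (hjn : j + 1 ≤ n)
    {k0 k1 k2 k3 k4 k5 k6 : Fin (n + 1) → ℕ}
    (hk0 : ∀ i : Fin (n + 1), k0 i = if (i : ℕ) ≤ j + 1 then 1 else 0)
    (h1 : k1 = k0 + evec n ⟨j, by omega⟩ + evec n ⟨j + 1, by omega⟩)
    (h2 : k2 = k0 + 2 • evec n ⟨j, by omega⟩ + 2 • evec n ⟨j + 1, by omega⟩)
    (h3 : k3 = k0 + evec n ⟨j + 1, by omega⟩)
    (h4 : k4 = k0 + evec n ⟨j, by omega⟩)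
    (h5 : k5 = k0 + evec n ⟨j, by omega⟩ + 2 • evec n ⟨j + 1, by omega⟩)
    (h6 : k6 = k0 + 2 • evec n ⟨j, by omega⟩ + 3 • evec n ⟨j + 1, by omega⟩)
    {x : Fin (n + 1) → ℝ} (hx : ∀ i, x i ∈ Set.Icc (-1 : ℝ) 1) {t : ℝ}
    (ht : x ⟨j, by omega⟩ = t) :
    ∃ D u w : ℝ, 0 ≤ D ∧ ampA n x k0 = D * w ∧
      ampA n x k1 = -(D * u * (1 - 3 * t ^ 2) * w ^ 2) ∧
      ampA n x k2 = D * u ^ 2 * (10 * t ^ 4 - 8 * t ^ 2 + 1) * w ^ 3 ∧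
      ampA n x k3 = -(D * t * w ^ 2) ∧
      ampA n x k4 = -(2 * D * u * t * w) ∧
      ampA n x k5 = -(2 * D * u * t * (2 * t ^ 2 - 1) * w ^ 3) ∧
      ampA n x k6 = -(3 * D * u ^ 2 * t * (5 * t ^ 4 - 5 * t ^ 2 + 1) * w ^ 4) := by
  obtain ⟨C, hC, hamp⟩ := exists_ampA_add_smul_evec hj hjn hk0 hx
  refine ⟨C * (1 - t ^ 2), x ⟨j - 1, by omega⟩, x ⟨j + 1, by omega⟩,
    mul_nonneg hC (ht ▸ one_sub_sq_nonneg_of_mem_Icc (hx _)),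
    ?_, ?_, ?_, ?_, ?_, ?_, ?_⟩
  · rw [hamp 0 0 k0 (by simp)]
    simp only [zero_add, Nat.cast_one, ampF_one_one, ht]; ring
  · rw [hamp 1 1 k1 (by simp [h1])]
    simp only [Nat.reduceAdd, Nat.cast_ofNat, ampF_two_two, ht]; ring
  · rw [hamp 2 2 k2 h2]
    simp only [Nat.reduceAdd, Nat.cast_ofNat, ampF_three_three, ht]; ring
  · rw [hamp 0 1 k3 (by simp [h3])]
    simp only [Nat.reduceAdd, Nat.cast_ofNat, Nat.cast_one, ampF_one_two, ht]; ring
  · rw [hamp 1 0 k4 (by simp [h4])]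
    simp only [Nat.reduceAdd, Nat.cast_ofNat, Nat.cast_one, ampF_two_one, ht]; ring
  · rw [hamp 1 2 k5 (by simp [h5])]
    simp only [Nat.reduceAdd, Nat.cast_ofNat, ampF_two_three, ht]; ring
  · rw [hamp 2 3 k6 h6]
    simp only [Nat.reduceAdd, Nat.cast_ofNat, ampF_three_four, ht]; ring

def pmSqrt (m d : ℝ) : Set ℝ := {m + √d, m - √d}

lemma pmSqrt_sq (m r : ℝ) : pmSqrt m (r ^ 2) = {m + r, m - r} := by
  rw [pmSqrt, Real.sqrt_sq_eq_abs]
  rcases abs_choice r with h | h <;> rw [h]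
  rw [Set.pair_comm, sub_neg_eq_add, ← sub_eq_add_neg]

lemma Set.pair_inter_pair_of_ne {α : Type*} {a b c : α} (h : b ≠ c) :
    ({a, b} ∩ {a, c} : Set α) = {a} := by
  rw [← Set.insert_inter_distrib, Set.singleton_inter_eq_empty.2 (by simpa using h),
    insert_empty_eq]

lemma seven_points_y_pair {D u t w a0 a1 a2 a3 a4 : ℝ} (hD : D ≠ 0) (hw : w ≠ 0)
    (ha0 : a0 = D * w) (ha1 : a1 = -(D * u * (1 - 3 * t ^ 2) * w ^ 2))
    (ha2 : a2 = D * u ^ 2 * (10 * t ^ 4 - 8 * t ^ 2 + 1) * w ^ 3) (ha3 : a3 = -(D * t * w ^ 2))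
    (ha4 : a4 = -(2 * D * u * t * w)) :
    pmSqrt (-(7 * a1) / (5 * a0))
        (3 * (a1 * a3 * a4) / a0 ^ 3 + (7 * a1 / (5 * a0)) ^ 2 - 9 * a2 / (5 * a0)) =
      {u * w, u * w * (9 - 42 * t ^ 2) / 5} := by
  have hm : -(7 * a1) / (5 * a0) = u * w * (7 - 21 * t ^ 2) / 5 := by
    rw [ha0, ha1]; field_simp; ring
  have hd : 3 * (a1 * a3 * a4) / a0 ^ 3 + (7 * a1 / (5 * a0)) ^ 2 - 9 * a2 / (5 * a0) =
      (u * w * (21 * t ^ 2 - 2) / 5) ^ 2 := by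
    rw [ha0, ha1, ha2, ha3, ha4]; field_simp; ring
  rw [hm, hd, pmSqrt_sq]
  congr 2 <;> ring

lemma seven_points_Y_pair {D u t w a0 a3 a4 a5 a6 : ℝ} (hD : D ≠ 0) (ht : t ≠ 0)
    (hw : w ≠ 0) (ha0 : a0 = D * w) (ha3 : a3 = -(D * t * w ^ 2))
    (ha4 : a4 = -(2 * D * u * t * w)) (ha5 : a5 = -(2 * D * u * t * (2 * t ^ 2 - 1) * w ^ 3))
    (ha6 : a6 = -(3 * D * u ^ 2 * t * (5 * t ^ 4 - 5 * t ^ 2 + 1) * w ^ 4)) :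
    pmSqrt (-(5 * a5) / (4 * a3))
        (5 * (a4 * a5) / (2 * a0 ^ 2) + (5 * a5 / (4 * a3)) ^ 2 - 4 * a6 / (3 * a3)) =
      {u * w, u * w * (4 - 10 * t ^ 2)} := by
  have hm : -(5 * a5) / (4 * a3) = u * w * (5 - 10 * t ^ 2) / 2 := by
    rw [ha3, ha5]; field_simp; ring
  have hd : 5 * (a4 * a5) / (2 * a0 ^ 2) + (5 * a5 / (4 * a3)) ^ 2 - 4 * a6 / (3 * a3) =
      (u * w * (10 * t ^ 2 - 3) / 2) ^ 2 := by
    rw [ha0, ha3, ha4, ha5, ha6]; field_simp; ring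
  rw [hm, hd, pmSqrt_sq]
  congr 2 <;> ring

lemma seven_points_x_eq {D u t w a0 a3 a4 : ℝ} (hD : 0 < D) (hu : u ≠ 0) (hw : w ≠ 0)
    (ha0 : a0 = D * w) (ha3 : a3 = -(D * t * w ^ 2)) (ha4 : a4 = -(2 * D * u * t * w)) :
    t = -(a3 / |a3|) * √(a3 * a4 / (2 * a0 ^ 2 * (u * w))) := by
  have harg : a3 * a4 / (2 * a0 ^ 2 * (u * w)) = t ^ 2 := by
    rw [ha0, ha3, ha4]; field_simp
  have ha3' : a3 = -t * (D * w ^ 2) := by rw [ha3]; ring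
  rw [harg, Real.sqrt_sq_eq_abs, ha3', abs_mul, abs_neg,
    abs_of_pos (mul_pos hD (pow_two_pos_of_ne_zero hw))]
  rcases eq_or_ne t 0 with rfl | ht
  · simp
  · field_simp

lemma seven_points_of_amplitudes {D u t w a0 a1 a2 a3 a4 a5 a6 : ℝ} (hD : 0 ≤ D)
    (ha0 : a0 = D * w) (ha1 : a1 = -(D * u * (1 - 3 * t ^ 2) * w ^ 2))
    (ha2 : a2 = D * u ^ 2 * (10 * t ^ 4 - 8 * t ^ 2 + 1) * w ^ 3) (ha3 : a3 = -(D * t * w ^ 2))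
    (ha4 : a4 = -(2 * D * u * t * w)) (ha5 : a5 = -(2 * D * u * t * (2 * t ^ 2 - 1) * w ^ 3))
    (ha6 : a6 = -(3 * D * u ^ 2 * t * (5 * t ^ 4 - 5 * t ^ 2 + 1) * w ^ 4))
    (h03 : a0 * a3 ≠ 0) (hne : 7 * a1 / (5 * a0) ≠ 5 * a5 / (4 * a3)) :
    ∃ y, pmSqrt (-(7 * a1) / (5 * a0))
          (3 * (a1 * a3 * a4) / a0 ^ 3 + (7 * a1 / (5 * a0)) ^ 2 - 9 * a2 / (5 * a0)) ∩
        pmSqrt (-(5 * a5) / (4 * a3))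
          (5 * (a4 * a5) / (2 * a0 ^ 2) + (5 * a5 / (4 * a3)) ^ 2 - 4 * a6 / (3 * a3)) = {y} ∧
      t = -(a3 / |a3|) * √(a3 * a4 / (2 * a0 ^ 2 * y)) := by
  have hDtw : D * t * w ≠ 0 := fun h =>
    h03 (by rw [ha0, ha3]; linear_combination (-(D * w ^ 2)) * h)
  obtain ⟨hDt, hw⟩ := mul_ne_zero_iff.1 hDtw
  obtain ⟨hD0, ht⟩ := mul_ne_zero_iff.1 hDt
  have hy : 7 * a1 / (5 * a0) = -(7 * u * (1 - 3 * t ^ 2) * w) / 5 := by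
    rw [ha0, ha1]; field_simp
  have hY : 5 * a5 / (4 * a3) = 5 * u * (2 * t ^ 2 - 1) * w / 2 := by
    rw [ha3, ha5]; field_simp; ring
  have hroots : u * w * (9 - 42 * t ^ 2) / 5 ≠ u * w * (4 - 10 * t ^ 2) := fun h =>
    hne (by rw [hy, hY]; linear_combination (-1 / 2 : ℝ) * h)
  have hu : u ≠ 0 := by rintro rfl; simp at hroots
  refine ⟨u * w, ?_, seven_points_x_eq (hD.lt_of_ne' hD0) hu hw ha0 ha3 ha4⟩
  rw [seven_points_y_pair hD0 hw ha0 ha1 ha2 ha3 ha4,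
    seven_points_Y_pair hD0 ht hw ha0 ha3 ha4 ha5 ha6]
  exact Set.pair_inter_pair_of_ne hroots

/-- Seven points formula: unique determination of the reflection
    coefficient `x_j` from seven amplitudes. -/
theorem seven_points (n j : ℕ) (hj1 : 1 ≤ j) (hj2 : j ≤ n - 1)
    (k0 k1 k2 k3 k4 k5 k6 : Fin (n+1) → ℕ)
    (hk0 : ∀ i : Fin (n+1), k0 i = if (i : ℕ) ≤ j + 1 then 1 else 0)
    (h1 : k1 = k0 + evec n ⟨j, by omega⟩ + evec n ⟨j + 1, by omega⟩)
    (h2 : k2 = k0 + 2 • evec n ⟨j, by omega⟩ + 2 • evec n ⟨j + 1, by omega⟩)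
    (h3 : k3 = k0 + evec n ⟨j + 1, by omega⟩)
    (h4 : k4 = k0 + evec n ⟨j, by omega⟩)
    (h5 : k5 = k0 + evec n ⟨j, by omega⟩ + 2 • evec n ⟨j + 1, by omega⟩)
    (h6 : k6 = k0 + 2 • evec n ⟨j, by omega⟩ + 3 • evec n ⟨j + 1, by omega⟩)
    (x : Fin (n+1) → ℝ) (hx : ∀ i, x i ∈ Set.Icc (-1 : ℝ) 1) :
    let a0 := ampA n x k0
    let a1 := ampA n x k1
    let a2 := ampA n x k2
    let a3 := ampA n x k3
    let a4 := ampA n x k4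
    let a5 := ampA n x k5
    let a6 := ampA n x k6
    let yp : ℝ := -(7 * a1) / (5 * a0) +
      Real.sqrt (3 * (a1 * a3 * a4) / a0 ^ 3 + (7 * a1 / (5 * a0)) ^ 2 - 9 * a2 / (5 * a0))
    let ym : ℝ := -(7 * a1) / (5 * a0) -
      Real.sqrt (3 * (a1 * a3 * a4) / a0 ^ 3 + (7 * a1 / (5 * a0)) ^ 2 - 9 * a2 / (5 * a0))
    let Yp : ℝ := -(5 * a5) / (4 * a3) +
      Real.sqrt (5 * (a4 * a5) / (2 * a0 ^ 2) + (5 * a5 / (4 * a3)) ^ 2 - 4 * a6 / (3 * a3))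
    let Ym : ℝ := -(5 * a5) / (4 * a3) -
      Real.sqrt (5 * (a4 * a5) / (2 * a0 ^ 2) + (5 * a5 / (4 * a3)) ^ 2 - 4 * a6 / (3 * a3))
    a0 * a3 ≠ 0 → 7 * a1 / (5 * a0) ≠ 5 * a5 / (4 * a3) →
      ∃ y : ℝ, ({yp, ym} ∩ {Yp, Ym} : Set ℝ) = {y} ∧
        x ⟨j, by omega⟩ = -(a3 / |a3|) * Real.sqrt (a3 * a4 / (2 * a0 ^ 2 * y)) := by
  intro a0 a1 a2 a3 a4 a5 a6 yp ym Yp Ym h03 hne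
  obtain ⟨D, u, w, hD, ha0, ha1, ha2, ha3, ha4, ha5, ha6⟩ :=
    exists_seven_points_amplitudes hj1 (by omega) hk0 h1 h2 h3 h4 h5 h6 hx rfl
  exact seven_points_of_amplitudes hD ha0 ha1 ha2 ha3 ha4 ha5 ha6 h03 hne
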